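/- arXiv:1812.02987 — 2 statements merged into one kernel-verified Lean document; each statement's English description precedes it below -/
import Mathlib

section
/- For two birth-death pairs p = (b,d) and p' = (b',d') with b ≤ d and b' ≤ d', the tent functions satisfy ‖Λ_p − Λ_{p'}‖_∞ ≤ ‖p − p'‖_∞, where ‖p − p'‖_∞ = max(|b−b'|, |d−d'|). -/
noncomputable def tent (b d t : ℝ) : ℝ := max 0 (min (t - b) (d - t))

theorem stmt_7 (b d b' d' : ℝ) (h : b ≤ d) (h' : b' ≤ d') :
    ∀ t, |tent b d t - tent b' d' t| ≤ max |b - b'| |d - d'| := by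
  intro t
  unfold tent
  calc |max 0 (min (t - b) (d - t)) - max 0 (min (t - b') (d' - t))|
      ≤ max |(0:ℝ) - 0| |min (t - b) (d - t) - min (t - b') (d' - t)| :=
        abs_max_sub_max_le_max _ _ _ _
    _ ≤ max |b - b'| |d - d'| := by
        apply max_le
        · simp [le_max_iff, abs_nonneg]
        · calc |min (t - b) (d - t) - min (t - b') (d' - t)|
              ≤ max |(t - b) - (t - b')| |(d - t) - (d' - t)| :=
                abs_min_sub_min_le_max _ _ _ _
            _ ≤ max |b - b'| |d - d'| := by
                have e1 : (t - b) - (t - b') = b' - b := by ring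
                have e2 : (d - t) - (d' - t) = d - d' := by ring
                rw [e1, e2, abs_sub_comm b' b]
end

section
/- (Convergence of silhouettes to the first landscape) Let (b₁,d₁),…,(b_N,d_N) be pairs with bⱼ < dⱼ, and suppose there is a unique index j* maximizing dⱼ − bⱼ. Then as q → ∞, the silhouette φ^{(q)}(t) = Σⱼ (dⱼ−bⱼ)^q Λⱼ(t) / Σⱼ (dⱼ−bⱼ)^q converges pointwise to Λ_{j*}(t) for every t ∈ ℝ. -/
/-! Nothing about tents is needed: for any values `f j`, the mean weighted by `w j ^ q` is unchanged
when every weight is divided by the largest one `w i`, and then `(w j / w i) ^ q → 0` for `j ≠ i`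
while the `i`-th normalized weight is constantly `1`. -/

open Filter

section WeightedMean

variable {ι : Type*} [Fintype ι] {w : ι → ℝ} {i : ι}

theorem sum_rpow_mul_div_sum_rpow_eq_div_rpow (hw : ∀ j, 0 ≤ w j) {D : ℝ} (hD : 0 < D)
    (f : ι → ℝ) (q : ℝ) :
    (∑ j, w j ^ q * f j) / ∑ j, w j ^ q = (∑ j, (w j / D) ^ q * f j) / ∑ j, (w j / D) ^ q := by
  simp only [Real.div_rpow (hw _) hD.le, div_mul_eq_mul_div]
  rw [← Finset.sum_div, ← Finset.sum_div,
    div_div_div_cancel_right₀ (Real.rpow_pos_of_pos hD q).ne']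

theorem tendsto_sum_div_rpow_mul_of_unique_max (hw : ∀ j, 0 ≤ w j) (hi : 0 < w i)
    (hmax : ∀ j, j ≠ i → w j < w i) (c : ι → ℝ) :
    Tendsto (fun q : ℝ => ∑ j, (w j / w i) ^ q * c j) atTop (nhds (c i)) := by
  classical
  have hterm : ∀ j ∈ Finset.univ, Tendsto (fun q : ℝ => (w j / w i) ^ q * c j) atTop
      (nhds (if j = i then c i else 0)) := by
    intro j _
    by_cases hj : j = i
    · subst hj
      simp [div_self hi.ne']
    · have hlt : w j / w i < 1 := (div_lt_one hi).2 (hmax j hj)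
      have hnonneg : 0 ≤ w j / w i := div_nonneg (hw j) hi.le
      simpa [hj] using
        (tendsto_rpow_atTop_of_base_lt_one _ (by linarith) hlt).mul_const (c j)
  simpa using tendsto_finsetSum Finset.univ hterm

theorem tendsto_sum_rpow_mul_div_sum_rpow (hw : ∀ j, 0 ≤ w j) (hi : 0 < w i)
    (hmax : ∀ j, j ≠ i → w j < w i) (f : ι → ℝ) :
    Tendsto (fun q : ℝ => (∑ j, w j ^ q * f j) / ∑ j, w j ^ q) atTop (nhds (f i)) := by
  simp only [sum_rpow_mul_div_sum_rpow_eq_div_rpow hw hi f]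
  have hnum := tendsto_sum_div_rpow_mul_of_unique_max hw hi hmax f
  have hden := tendsto_sum_div_rpow_mul_of_unique_max hw hi hmax 1
  simpa [Pi.div_def] using hnum.div hden one_ne_zero

end WeightedMean

theorem stmt_19 (N : ℕ) (b d : Fin N → ℝ) (hbd : ∀ j, b j < d j)
    (jstar : Fin N) (hstar : ∀ j, j ≠ jstar → d j - b j < d jstar - b jstar) :
    ∀ t : ℝ,
      Tendsto
        (fun q : ℝ => (∑ j, (d j - b j) ^ q * tent (b j) (d j) t) / ∑ j, (d j - b j) ^ q)
        atTop (nhds (tent (b jstar) (d jstar) t)) := fun t =>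
  tendsto_sum_rpow_mul_div_sum_rpow (fun j => (sub_pos.2 (hbd j)).le) (sub_pos.2 (hbd jstar))
    hstar (fun j => tent (b j) (d j) t)
end
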